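/- If p is a prime with p ≡ 1 or 3 (mod 8), p ≠ 3, n ≥ 1 is an integer, and m = ((2n+1)p)^2 - 2 is square-free, then the class number of Q(√m) is greater than 1. -/

import Mathlib

/-!
If the class number of `K = ℚ(√m)` were `1`, then `𝓞 K = ℤ[√m]` (as `m ≡ 3 mod 4`) would be a
principal ideal domain. Since `-2` is a square mod `p` and `m ≡ -2 mod p`, there is `t` with
`p ∣ (t + √m)(t - √m)` while `p` divides neither factor; so `p` is not prime, hence not
irreducible, and a proper factor of `p` has norm `±p`.

On the other hand, with `k = (2n + 1)p` we have `m = k² - 2`, and `k² - 1 + k√m` is a unit of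
norm `1`. Multiplying a solution of `a² - m b² = N` with `3|N| ≤ k` by its inverse strictly
decreases `|b|`; the descent only stops at `b = 0` or `a = ±kb`, where `N = a²` or `N = 2b²`,
and `±p` is neither.
-/

open IntermediateField NumberField Polynomial

theorem exists_eq_add_mul_of_mem_adjoin_of_sq_eq {F L : Type*} [Field F] [Field L]
    [Algebra F L] {α : L} {c : F} (hα : α ^ 2 = algebraMap F L c) {x : L} (hx : x ∈ F⟮α⟯) :
    ∃ a b : F, x = algebraMap F L a + algebraMap F L b * α := by
  have hint : IsIntegral F α := ⟨X ^ 2 - C c, by monicity!, by simp [hα]⟩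
  rw [← mem_toSubalgebra, adjoin_simple_toSubalgebra_of_isAlgebraic hint.isAlgebraic] at hx
  induction hx using Algebra.adjoin_induction with
  | mem y hy => exact ⟨0, 1, by simp [Set.mem_singleton_iff.1 hy]⟩
  | algebraMap r => exact ⟨r, 0, by simp⟩
  | add y z _ _ hy hz =>
    obtain ⟨a, b, rfl⟩ := hy
    obtain ⟨a', b', rfl⟩ := hz
    exact ⟨a + a', b + b', by simp only [map_add]; ring⟩
  | mul y z _ _ hy hz =>
    obtain ⟨a, b, rfl⟩ := hy
    obtain ⟨a', b', rfl⟩ := hz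
    refine ⟨a * a' + b * b' * c, a * b' + b * a', ?_⟩
    simp only [map_add, map_mul]
    linear_combination algebraMap F L b * algebraMap F L b' * hα

theorem Rat.den_eq_one_of_squarefree_mul_sq {m : ℕ} (hm : Squarefree m) {q : ℚ} {z : ℤ}
    (h : m * q ^ 2 = z) : q.den = 1 := by
  have hnum : (m : ℤ) * q.num ^ 2 = z * q.den ^ 2 := by
    rw [← Rat.num_div_den q] at h
    field_simp at h
    rw [mul_comm (z : ℤ)]
    exact_mod_cast h
  have hcop : IsCoprime ((q.den : ℤ) ^ 2) (q.num ^ 2) := q.isCoprime_num_den.symm.pow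
  have hdvd : ((q.den ^ 2 : ℕ) : ℤ) ∣ m := hcop.dvd_of_dvd_mul_right ⟨z, by linarith⟩
  exact Nat.isUnit_iff.1 (hm _ (by rw [← sq]; exact_mod_cast hdvd))

theorem two_dvd_of_sq_sub_mul_sq_eq_four_mul {m A B N : ℤ} (hm : m % 4 = 2 ∨ m % 4 = 3)
    (h : A ^ 2 - m * B ^ 2 = 4 * N) : 2 ∣ A ∧ 2 ∣ B := by
  rcases Int.even_or_odd' A with ⟨u, rfl | rfl⟩ <;> rcases Int.even_or_odd' B with ⟨v, rfl | rfl⟩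
  · exact ⟨⟨u, rfl⟩, ⟨v, rfl⟩⟩
  · have : m = 4 * (u ^ 2 - m * v ^ 2 - m * v - N) := by linear_combination -h
    omega
  · have : 1 = 4 * (N - u ^ 2 - u + m * v ^ 2) := by linear_combination h
    omega
  · have : 1 - m = 4 * (N - u ^ 2 - u + m * v ^ 2 + m * v) := by linear_combination h
    omega

theorem Int.ne_mul_self_of_emod_four_eq_two_or_three {m : ℤ} (hm : m % 4 = 2 ∨ m % 4 = 3)
    (n : ℤ) : m ≠ n * n := by
  rintro rfl
  rcases Int.even_or_odd' n with ⟨u, rfl | rfl⟩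
  · have : (2 * u) * (2 * u) = 4 * (u * u) := by ring
    omega
  · have : (2 * u + 1) * (2 * u + 1) = 4 * (u * u + u) + 1 := by ring
    omega

theorem exists_int_eq_trace_norm_of_isIntegral {α : ℝ} {c : ℚ} (hα : α ^ 2 = c)
    (hirr : Irrational α) {a b : ℚ} (h : IsIntegral ℤ ((a : ℝ) + b * α)) :
    ∃ T N : ℤ, (T : ℚ) = 2 * a ∧ (N : ℚ) = a ^ 2 - c * b ^ 2 := by
  rcases eq_or_ne b 0 with rfl | hb
  · have ha : IsIntegral ℤ a := by
      rw [← isIntegral_algebraMap_iff (algebraMap ℚ ℝ).injective]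
      simpa using h
    obtain ⟨A, hA⟩ := IsIntegrallyClosed.isIntegral_iff.1 ha
    exact ⟨2 * A, A ^ 2, by simp [← hA], by simp [← hA]⟩
  set x : ℝ := a + b * α
  set q : ℚ[X] := X ^ 2 - C (2 * a) * X + C (a ^ 2 - c * b ^ 2) with hq
  have hqm : q.Monic := by rw [hq]; monicity!
  have hqd : q.natDegree = 2 := by rw [hq]; compute_degree!
  have hqx : aeval x q = 0 := by
    simp only [hq, x, map_add, map_sub, map_mul, map_pow, aeval_X, aeval_C, eq_ratCast]
    push_cast
    linear_combination (b : ℝ) ^ 2 * hα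
  have hxQ : IsIntegral ℚ x := h.tower_top
  have hdeg : 2 ≤ (minpoly ℚ x).natDegree := by
    refine (minpoly.two_le_natDegree_iff hxQ).2 ?_
    rintro ⟨r, hr⟩
    exact (hirr.ratCast_mul hb).ratCast_add a ⟨r, by simpa using hr⟩
  have hmin : q = (minpoly ℤ x).map (algebraMap ℤ ℚ) := by
    rw [← minpoly.isIntegrallyClosed_eq_field_fractions' ℚ h]
    exact eq_of_monic_of_dvd_of_natDegree_le (minpoly.monic hxQ) hqm (minpoly.dvd ℚ x hqx)
      (hqd ▸ hdeg)
  refine ⟨-(minpoly ℤ x).coeff 1, (minpoly ℤ x).coeff 0, ?_, ?_⟩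
  · have := congrArg (coeff · 1) hmin
    simp only [hq, coeff_add, coeff_sub, coeff_X_pow, coeff_C_mul, coeff_X, coeff_C, coeff_map,
      algebraMap_int_eq, eq_intCast] at this
    norm_num at this
    push_cast
    linarith
  · have := congrArg (coeff · 0) hmin
    simp only [hq, coeff_add, coeff_sub, coeff_X_pow, coeff_C_mul, coeff_X, coeff_C, coeff_map,
      algebraMap_int_eq, eq_intCast] at this
    norm_num at this
    exact this.symm

theorem exists_int_eq_of_isIntegral_add_mul_sqrt {m : ℕ} (hsf : Squarefree m)
    (hm4 : m % 4 = 2 ∨ m % 4 = 3) {a b : ℚ} (h : IsIntegral ℤ ((a : ℝ) + b * √m)) :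
    ∃ A B : ℤ, (A : ℚ) = a ∧ (B : ℚ) = b := by
  have hirr : Irrational √m := irrational_sqrt_natCast_iff.2 fun ⟨r, hr⟩ =>
    Int.ne_mul_self_of_emod_four_eq_two_or_three (m := m) (by omega) r (by exact_mod_cast hr)
  have hα : √m ^ 2 = ((m : ℚ) : ℝ) := by simp
  obtain ⟨T, N, hT, hN⟩ := exists_int_eq_trace_norm_of_isIntegral hα hirr h
  have hden : (2 * b).den = 1 :=
    Rat.den_eq_one_of_squarefree_mul_sq hsf (z := T ^ 2 - 4 * N)
      (by push_cast; rw [hT, hN]; ring)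
  set B := (2 * b).num
  have hB : (B : ℚ) = 2 * b := Rat.coe_int_num_of_den_eq_one hden
  have hTB : T ^ 2 - m * B ^ 2 = 4 * N := by
    exact_mod_cast (show (T : ℚ) ^ 2 - m * B ^ 2 = 4 * N by rw [hT, hB, hN]; ring)
  obtain ⟨⟨A', hA'⟩, ⟨B', hB'⟩⟩ := two_dvd_of_sq_sub_mul_sq_eq_four_mul (by omega) hTB
  refine ⟨A', B', ?_, ?_⟩
  · have : (T : ℚ) = 2 * A' := by exact_mod_cast hA'
    linarith
  · have : (B : ℚ) = 2 * B' := by exact_mod_cast hB'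
    linarith

section RingOfIntegers

variable {m : ℕ} {K : IntermediateField ℚ ℝ}

noncomputable def sqrtRingOfIntegers (hK : K = ℚ⟮(√m : ℝ)⟯) :
    {r : 𝓞 K // r * r = ((m : ℤ) : 𝓞 K)} :=
  have hmem : √m ∈ K := hK ▸ mem_adjoin_simple_self ℚ _
  have hsq : (⟨√m, hmem⟩ : K) * ⟨√m, hmem⟩ = (m : K) := Subtype.ext (by simp)
  ⟨⟨⟨√m, hmem⟩, X ^ 2 - C (m : ℤ), by monicity!, by simp [sq, hsq]⟩,
    RingOfIntegers.ext (hsq.trans (by simp))⟩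

@[simp]
lemma coe_sqrtRingOfIntegers (hK : K = ℚ⟮(√m : ℝ)⟯) :
    (((sqrtRingOfIntegers hK : 𝓞 K) : K) : ℝ) = √m :=
  rfl

theorem bijective_lift_sqrtRingOfIntegers (hsf : Squarefree m) (hm4 : m % 4 = 2 ∨ m % 4 = 3)
    (hK : K = ℚ⟮(√m : ℝ)⟯) : Function.Bijective (Zsqrtd.lift (sqrtRingOfIntegers hK)) := by
  refine ⟨Zsqrtd.lift_injective _ (Int.ne_mul_self_of_emod_four_eq_two_or_three (by omega)),
    fun x => ?_⟩
  obtain ⟨a, b, hab⟩ := exists_eq_add_mul_of_mem_adjoin_of_sq_eq (F := ℚ) (α := √m) (c := m)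
    (x := ((x : K) : ℝ)) (by simp) (hK ▸ (x : K).2)
  simp only [eq_ratCast] at hab
  have hx : IsIntegral ℤ ((x : K) : ℝ) := x.isIntegral_coe.algebraMap
  rw [hab] at hx
  obtain ⟨A, B, rfl, rfl⟩ := exists_int_eq_of_isIntegral_add_mul_sqrt hsf hm4 hx
  refine ⟨⟨A, B⟩, RingOfIntegers.ext (Subtype.ext ?_)⟩
  simp [Zsqrtd.lift_apply_apply, hab]

noncomputable def zsqrtdEquivRingOfIntegers (hsf : Squarefree m) (hm4 : m % 4 = 2 ∨ m % 4 = 3)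
    (hK : K = ℚ⟮(√m : ℝ)⟯) : ℤ√(m : ℤ) ≃+* 𝓞 K :=
  RingEquiv.ofBijective _ (bijective_lift_sqrtRingOfIntegers hsf hm4 hK)

end RingOfIntegers

namespace Zsqrtd

variable {d : ℤ}

lemma not_isUnit_natCast {p : ℕ} (hp : 1 < p) : ¬IsUnit (p : ℤ√d) := by
  rw [← norm_eq_one_iff, norm_natCast, Int.natAbs_mul, Int.natAbs_natCast]
  nlinarith

lemma not_prime_natCast_of_dvd_sq_sub {p : ℕ} (hp : 1 < p) {t : ℤ} (hpt : (p : ℤ) ∣ t ^ 2 - d) :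
    ¬Prime (p : ℤ√d) := by
  intro hpr
  have hfac : (⟨t, 1⟩ * ⟨t, -1⟩ : ℤ√d) = ((t ^ 2 - d : ℤ) : ℤ√d) := by
    ext <;> simp only [re_mul, im_mul, re_intCast, im_intCast] <;> ring
  have hdvd : (p : ℤ√d) ∣ ⟨t, 1⟩ * ⟨t, -1⟩ := by
    rw [hfac, ← Int.cast_natCast, intCast_dvd_intCast]
    exact hpt
  rcases hpr.dvd_or_dvd hdvd with h | h <;>
    · rw [← Int.cast_natCast, intCast_dvd] at h
      have hp1 : (p : ℤ) ∣ 1 := by simpa using h.2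
      exact hp.ne' (by exact_mod_cast Int.eq_one_of_dvd_one (Int.natCast_nonneg p) hp1)

theorem exists_natAbs_norm_eq [IsDomain (ℤ√d)] [IsPrincipalIdealRing (ℤ√d)] {p : ℕ}
    (hp : p.Prime) {t : ℤ} (hpt : (p : ℤ) ∣ t ^ 2 - d) : ∃ z : ℤ√d, z.norm.natAbs = p := by
  have hirr : ¬Irreducible (p : ℤ√d) :=
    fun h => not_prime_natCast_of_dvd_sq_sub hp.one_lt hpt (irreducible_iff_prime.1 h)
  obtain ⟨x, y, hxy, hx, hy⟩ : ∃ x y : ℤ√d, (p : ℤ√d) = x * y ∧ ¬IsUnit x ∧ ¬IsUnit y := by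
    simpa [irreducible_iff, not_isUnit_natCast hp.one_lt, not_forall, not_or] using hirr
  refine ⟨x, ((hp.mul_eq_prime_sq_iff (mt norm_eq_one_iff.1 hx) (mt norm_eq_one_iff.1 hy)).1 ?_).1⟩
  rw [← Int.natAbs_mul, ← norm_mul, ← hxy, norm_natCast, Int.natAbs_mul, Int.natAbs_natCast, sq]

end Zsqrtd

section Descent

variable {k N a b : ℤ}

lemma le_mul_of_sq_sub_mul_sq_eq (hk : 3 * |N| ≤ k) (hb : 0 < b)
    (h : a ^ 2 - (k ^ 2 - 2) * b ^ 2 = N) : a ≤ k * b := by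
  by_contra! hlt
  have hsq : (k * b + 1) ^ 2 ≤ a ^ 2 := pow_le_pow_left₀ (by nlinarith [abs_nonneg N]) hlt 2
  nlinarith [le_abs_self N, abs_nonneg N]

lemma mul_lt_of_sq_sub_mul_sq_eq (hk : 3 * |N| ≤ k) (hN : N ≠ 0) (ha : 0 ≤ a) (hb : 0 < b)
    (hlt : a < k * b) (h : a ^ 2 - (k ^ 2 - 2) * b ^ 2 = N) : (k ^ 2 - 2) * b < k * a := by
  have hN1 : 1 ≤ |N| := Int.one_le_abs hN
  have hk3 : 3 ≤ k := by linarith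
  have hsq : a ^ 2 ≤ (k * b - 1) ^ 2 := pow_le_pow_left₀ ha (by linarith) 2
  have hb2 : 2 * k * b - 1 + N ≤ 2 * b ^ 2 := by nlinarith
  have hd : 0 < k ^ 2 - 2 := by nlinarith
  have key : ((k ^ 2 - 2) * b) ^ 2 < (k * a) ^ 2 := by
    have e : (k * a) ^ 2 - ((k ^ 2 - 2) * b) ^ 2 = 2 * (k ^ 2 - 2) * b ^ 2 + k ^ 2 * N := by
      rw [← h]; ring
    have h0 : 2 * k - 1 - |N| ≤ 2 * b ^ 2 := by nlinarith [neg_abs_le N]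
    have h1 := mul_le_mul_of_nonneg_left h0 hd.le
    nlinarith [neg_abs_le N, mul_le_mul_of_nonneg_left hk (sq_nonneg k)]
  exact lt_of_pow_lt_pow_left₀ 2 (by positivity) key

theorem isSquare_or_eq_two_mul_sq_of_sq_sub_mul_sq_eq (hk : 3 * |N| ≤ k)
    (h : a ^ 2 - (k ^ 2 - 2) * b ^ 2 = N) : IsSquare N ∨ ∃ c, N = 2 * c ^ 2 := by
  rcases eq_or_ne N 0 with rfl | hN
  · exact Or.inl IsSquare.zero
  induction hB : b.natAbs using Nat.strong_induction_on generalizing a b with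
  | _ B ih =>
  subst hB
  rcases eq_or_ne b 0 with rfl | hb
  · exact Or.inl ⟨a, by rw [← h]; ring⟩
  have h' : |a| ^ 2 - (k ^ 2 - 2) * |b| ^ 2 = N := by rwa [sq_abs, sq_abs]
  have hb' : 0 < |b| := abs_pos.2 hb
  rcases (le_mul_of_sq_sub_mul_sq_eq hk hb' h').eq_or_lt with heq | hlt
  · exact Or.inr ⟨|b|, by rw [← h', heq]; ring⟩
  have hgt := mul_lt_of_sq_sub_mul_sq_eq hk hN (abs_nonneg a) hb' hlt h'
  -- multiply by the unit `(k ^ 2 - 1) - k √(k ^ 2 - 2)` of norm 1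
  refine ih _ ?_ (a := (k ^ 2 - 1) * |a| - k * (k ^ 2 - 2) * |b|)
    (b := (k ^ 2 - 1) * |b| - k * |a|) (by rw [← h']; ring) rfl
  zify
  rw [abs_lt]
  have hk₀ : 0 < k := by linarith [Int.one_le_abs hN]
  constructor <;> nlinarith [mul_lt_mul_of_pos_left hlt hk₀]

end Descent

theorem exists_dvd_sq_sub_of_dvd_add_two {p : ℕ} [Fact p.Prime] (hp8 : p % 8 = 1 ∨ p % 8 = 3)
    {m : ℤ} (hm : (p : ℤ) ∣ m + 2) : ∃ t : ℤ, (p : ℤ) ∣ t ^ 2 - m := by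
  obtain ⟨r, hr⟩ := (ZMod.exists_sq_eq_neg_two_iff (by omega)).2 hp8
  refine ⟨r.val, ?_⟩
  rw [← ZMod.intCast_zmod_eq_zero_iff_dvd] at hm ⊢
  push_cast at hm ⊢
  rw [ZMod.natCast_zmod_val]
  linear_combination -hm - hr

theorem not_isSquare_or_eq_two_mul_sq_of_natAbs_eq {p : ℕ} (hp : p.Prime) (hp2 : p ≠ 2) {N : ℤ}
    (hN : N.natAbs = p) : ¬(IsSquare N ∨ ∃ c, N = 2 * c ^ 2) := by
  rintro (⟨r, rfl⟩ | ⟨c, rfl⟩)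
  · exact hp.prime.not_isSquare ⟨r.natAbs, by rw [← hN, Int.natAbs_mul]⟩
  · refine hp2 ((Nat.prime_dvd_prime_iff_eq Nat.prime_two hp).1 ⟨c.natAbs ^ 2, ?_⟩).symm
    rw [← hN, Int.natAbs_mul, Int.natAbs_pow]
    rfl

theorem stmt_13_general (p n : ℕ) (hp : p.Prime) (hp8 : p % 8 = 1 ∨ p % 8 = 3)
    (hn : 1 ≤ n)
    (m : ℕ) (hm : (m : ℤ) = ((2 * (n : ℤ) + 1) * p) ^ 2 - 2) (hsf : Squarefree m)
    (K : IntermediateField ℚ ℝ) (hK : K = ℚ⟮Real.sqrt m⟯) [NumberField K] :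
    1 < NumberField.classNumber K := by
  have hm4 : m % 4 = 3 := by
    obtain ⟨j, hj⟩ : Odd ((2 * (n : ℤ) + 1) * p) := (odd_two_mul_add_one _).mul (by
      rw [Int.odd_coe_nat, Nat.odd_iff]; omega)
    have : (m : ℤ) = 4 * (j ^ 2 + j) - 1 := by rw [hm, hj]; ring
    omega
  by_contra! hcl
  have : IsPrincipalIdealRing (𝓞 K) := classNumber_eq_one_iff.1 (by linarith [classNumber_pos K])
  let e := zsqrtdEquivRingOfIntegers hsf (Or.inr hm4) hK
  have : IsDomain (ℤ√(m : ℤ)) := e.injective.isDomain e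
  have : IsPrincipalIdealRing (ℤ√(m : ℤ)) :=
    IsPrincipalIdealRing.of_surjective e.symm e.symm.surjective
  have : Fact p.Prime := ⟨hp⟩
  obtain ⟨t, ht⟩ := exists_dvd_sq_sub_of_dvd_add_two hp8 (m := m)
    ⟨(2 * n + 1) ^ 2 * p, by rw [hm]; ring⟩
  obtain ⟨z, hz⟩ := Zsqrtd.exists_natAbs_norm_eq hp ht
  refine not_isSquare_or_eq_two_mul_sq_of_natAbs_eq hp (by omega) hz
    (isSquare_or_eq_two_mul_sq_of_sq_sub_mul_sq_eq (k := (2 * n + 1) * p) ?_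
      (a := z.re) (b := z.im) ?_)
  · rw [Int.abs_eq_natAbs, hz]
    nlinarith
  · rw [Zsqrtd.norm_def, ← hm]
    ring

theorem stmt_13 (p n : ℕ) (hp : p.Prime) (hp8 : p % 8 = 1 ∨ p % 8 = 3)
    (hp3 : p ≠ 3) (hn : 1 ≤ n)
    (m : ℕ) (hm : (m : ℤ) = ((2 * (n : ℤ) + 1) * p) ^ 2 - 2) (hsf : Squarefree m)
    (K : IntermediateField ℚ ℝ) (hK : K = ℚ⟮Real.sqrt m⟯) [NumberField K] :
    1 < NumberField.classNumber K :=
  stmt_13_general p n hp hp8 hn m hm hsf K hK
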